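/- Suppose 2 < s < n. Let x₀ ∈ ℝⁿ, C₀ > 0, and let u : ℝⁿ → [0,∞] be a Borel measurable function satisfying u(x) ≥ C₀·𝒩u(x) + C₀·|x−x₀|^{(αs−n)/(s−1)} for all x ∈ ℝⁿ. Then for any q > 1 there exist constants C(q) > 0 depending on q, n, α, s, C₀ and C > 0 depending on n, α, s, C₀ such that for all x ∈ ℝⁿ, u(x) ≥ C(q) · Σ_{j=1}^∞ j^{q(2−s)/(s−1)} · C^j · 𝒩^j(f)(x) + C·|x−x₀|^{(αs−n)/(s−1)}, where f(y) = |y−x₀|^{(αs−n)/(s−1)}. -/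

import Mathlib

open MeasureTheory Metric Set Filter
open scoped ENNReal NNReal Topology

noncomputable section

/-- `n`-dimensional Euclidean space. -/
abbrev En (n : ℕ) : Type := EuclideanSpace ℝ (Fin n)

/-- The truncated Wolff potential
`W^ρ_{α,s} μ (x) = ∫_0^ρ (μ(B(x,r))/r^{n-αs})^{1/(s-1)} dr/r`. -/
noncomputable def wolffT (n : ℕ) (α s : ℝ) (μ : Measure (En n)) (ρ : ℝ) (x : En n) : ℝ≥0∞ :=
  ∫⁻ r in Set.Ioo (0:ℝ) ρ,
    (μ (Metric.ball x r) / ENNReal.ofReal (r ^ ((n:ℝ) - α * s))) ^ (1/(s-1))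
      * ENNReal.ofReal r⁻¹

/-- The (full) Wolff potential
`W_{α,s} μ (x) = ∫_0^∞ (μ(B(x,r))/r^{n-αs})^{1/(s-1)} dr/r`. -/
noncomputable def wolff (n : ℕ) (α s : ℝ) (μ : Measure (En n)) (x : En n) : ℝ≥0∞ :=
  ∫⁻ r in Set.Ioi (0:ℝ),
    (μ (Metric.ball x r) / ENNReal.ofReal (r ^ ((n:ℝ) - α * s))) ^ (1/(s-1))
      * ENNReal.ofReal r⁻¹

/-- The truncated Riesz-type potential
`I^ρ μ (x) = ∫_0^ρ (μ(B(x,r))/r^{n-αs}) dr/r`. -/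
noncomputable def rieszT (n : ℕ) (α s : ℝ) (μ : Measure (En n)) (ρ : ℝ) (x : En n) : ℝ≥0∞ :=
  ∫⁻ r in Set.Ioo (0:ℝ) ρ,
    (μ (Metric.ball x r) / ENNReal.ofReal (r ^ ((n:ℝ) - α * s))) * ENNReal.ofReal r⁻¹

/-- The nonlinear operator `𝒩 f (x) = W_{α,s}(f^{s-1} dσ)(x)`. -/
noncomputable def Nop (n : ℕ) (α s : ℝ) (σ : Measure (En n)) (f : En n → ℝ≥0∞) (x : En n) :
    ℝ≥0∞ :=
  ∫⁻ r in Set.Ioi (0:ℝ),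
    (ENNReal.ofReal (r ^ (α * s - (n:ℝ))) * ∫⁻ y in Metric.ball x r, (f y) ^ (s-1) ∂σ)
        ^ (1/(s-1))
      * ENNReal.ofReal r⁻¹

/-- The Riesz potential `I_α f (x) = (n-α)⁻¹ ∫ f(y) |x-y|^{α-n} dy`. -/
noncomputable def rieszPot (n : ℕ) (α : ℝ) (f : En n → ℝ≥0∞) (x : En n) : ℝ≥0∞ :=
  ENNReal.ofReal (((n:ℝ) - α)⁻¹) * ∫⁻ y, f y * ENNReal.ofReal (‖x - y‖ ^ (α - (n:ℝ)))

/-- The Riesz capacity `cap_{α,s}(A) = inf { ∫ f^s : f ≥ 0, I_α f ≥ 1 on A }`. -/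
noncomputable def rieszCap (n : ℕ) (α s : ℝ) (A : Set (En n)) : ℝ≥0∞ :=
  ⨅ (f : En n → ℝ≥0∞) (_ : Measurable f) (_ : ∀ x ∈ A, 1 ≤ rieszPot n α f x),
    ∫⁻ y, (f y) ^ s

/-- Extended exponential: `eexp x = exp x` for finite `x`, with `eexp ∞ = ∞`. -/
noncomputable def eexp (x : ℝ≥0∞) : ℝ≥0∞ :=
  if x = ∞ then ∞ else ENNReal.ofReal (Real.exp x.toReal)

/-!
Since `𝒩` is monotone and positively homogeneous of degree one, iterating `C₀ 𝒩 u ≤ u` starting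
from `C₀ f ≤ u` gives `C₀^{j+1} 𝒩^j f ≤ u` for every `j`. For `s > 2` the weights
`j^{q(2-s)/(s-1)}` are at most `1`, so with `C = C(q) = C₀/2` the series is dominated by a
geometric series and contributes at most `u/2`, while `C f ≤ u/2`.
-/

section IterationBound

variable {X : Type*} {T : (X → ℝ≥0∞) → (X → ℝ≥0∞)} {c : ℝ≥0∞} {f u : X → ℝ≥0∞}

theorem pow_succ_smul_iterate_le (hT : Monotone T)
    (hT_smul : ∀ a : ℝ≥0∞, a ≠ ∞ → ∀ g, T (a • g) = a • T g) (hc : c ≠ ∞)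
    (hu : c • T u ≤ u) (hf : c • f ≤ u) (j : ℕ) : c ^ (j + 1) • T^[j] f ≤ u := by
  induction j with
  | zero => simpa using hf
  | succ j ih =>
    calc c ^ (j + 2) • T^[j + 1] f = c • T (c ^ (j + 1) • T^[j] f) := by
          rw [Function.iterate_succ_apply', pow_succ', mul_smul,
            hT_smul _ (ENNReal.pow_ne_top hc)]
      _ ≤ c • T u := smul_le_smul_of_nonneg_left (hT ih) zero_le
      _ ≤ u := hu

end IterationBound

theorem ENNReal.mul_tsum_pow_half_mul_le {c b : ℝ≥0∞} {w v : ℕ → ℝ≥0∞} (hw : ∀ j, w j ≤ 1)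
    (hv : ∀ j, c ^ (j + 2) * v j ≤ b) :
    c / 2 * ∑' j, w j * (c / 2) ^ (j + 1) * v j ≤ b / 2 := by
  have hterm : ∀ j, c / 2 * (w j * (c / 2) ^ (j + 1) * v j) ≤ 2⁻¹ * (2⁻¹ ^ (j + 1) * b) := by
    intro j
    calc c / 2 * (w j * (c / 2) ^ (j + 1) * v j)
        ≤ c / 2 * (1 * (c / 2) ^ (j + 1) * v j) := by gcongr; exact hw j
      _ = 2⁻¹ * (2⁻¹ ^ (j + 1) * (c ^ (j + 2) * v j)) := by
          simp only [div_eq_mul_inv, one_mul, mul_pow]; ring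
      _ ≤ 2⁻¹ * (2⁻¹ ^ (j + 1) * b) := by gcongr; exact hv j
  calc c / 2 * ∑' j, w j * (c / 2) ^ (j + 1) * v j
      = ∑' j, c / 2 * (w j * (c / 2) ^ (j + 1) * v j) := ENNReal.tsum_mul_left.symm
    _ ≤ ∑' j, 2⁻¹ * (2⁻¹ ^ (j + 1) * b) := ENNReal.tsum_le_tsum hterm
    _ = b / 2 := by
      rw [ENNReal.tsum_mul_left, ENNReal.tsum_mul_right, ENNReal.tsum_geometric_add_one,
        ENNReal.one_sub_inv_two, inv_inv, ENNReal.inv_mul_cancel two_ne_zero ENNReal.ofNat_ne_top,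
        one_mul, ENNReal.div_eq_inv_mul]

section Nop

variable {n : ℕ} {α s : ℝ} (σ : Measure (En n))

theorem Nop_monotone (hs : 1 ≤ s) : Monotone (Nop n α s σ) := by
  intro f g hfg x
  unfold Nop
  gcongr with r y
  exact hfg y

theorem Nop_smul (hs : 1 < s) (a : ℝ≥0∞) (ha : a ≠ ∞) (g : En n → ℝ≥0∞) :
    Nop n α s σ (a • g) = a • Nop n α s σ g := by
  have hs₀ : 0 ≤ s - 1 := by linarith
  ext x
  simp only [Nop, Pi.smul_apply, smul_eq_mul]
  rw [← lintegral_const_mul' a _ ha]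
  refine lintegral_congr fun r => ?_
  simp_rw [ENNReal.mul_rpow_of_nonneg _ _ hs₀]
  rw [lintegral_const_mul' _ _ (ENNReal.rpow_ne_top_of_nonneg hs₀ ha), mul_left_comm,
    ENNReal.mul_rpow_of_nonneg _ _ (by positivity), ← ENNReal.rpow_mul, mul_one_div,
    div_self (by linarith), ENNReal.rpow_one, mul_assoc]

end Nop

theorem statement7_general (n : ℕ) (α s C₀ : ℝ) (hs : 2 < s) (hC₀ : 0 < C₀) :
    ∃ C : ℝ, 0 < C ∧
      ∀ q : ℝ, 1 < q →
        ∃ Cq : ℝ, 0 < Cq ∧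
          ∀ σ : Measure (En n), IsLocallyFiniteMeasure σ →
            ∀ (x₀ : En n) (u : En n → ℝ≥0∞), Measurable u →
              (∀ x : En n,
                ENNReal.ofReal C₀ * Nop n α s σ u x
                  + ENNReal.ofReal C₀ * (ENNReal.ofReal ‖x - x₀‖) ^ ((α*s-(n:ℝ))/(s-1))
                  ≤ u x) →
              ∀ x : En n,
                ENNReal.ofReal Cq *
                    (∑' j : ℕ, ((j:ℝ≥0∞) + 1) ^ (q*(2-s)/(s-1)) * ENNReal.ofReal C ^ (j+1)
                      * ((Nop n α s σ)^[j+1]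
                          (fun y => (ENNReal.ofReal ‖y - x₀‖) ^ ((α*s-(n:ℝ))/(s-1))) x))
                  + ENNReal.ofReal C * (ENNReal.ofReal ‖x - x₀‖) ^ ((α*s-(n:ℝ))/(s-1))
                  ≤ u x := by
  refine ⟨C₀ / 2, by positivity, fun q hq => ⟨C₀ / 2, by positivity, ?_⟩⟩
  intro σ _ x₀ u _ hsuper x
  set f : En n → ℝ≥0∞ := fun y => (ENNReal.ofReal ‖y - x₀‖) ^ ((α*s-(n:ℝ))/(s-1))
  set c := ENNReal.ofReal C₀
  have hNu : c • Nop n α s σ u ≤ u := fun y => le_self_add.trans (hsuper y)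
  have hf : c • f ≤ u := fun y => le_add_self.trans (hsuper y)
  have hiter := pow_succ_smul_iterate_le (Nop_monotone σ (by linarith))
    (Nop_smul σ (by linarith)) ENNReal.ofReal_ne_top hNu hf
  have hweight (j : ℕ) : ((j:ℝ≥0∞) + 1) ^ (q*(2-s)/(s-1)) ≤ 1 :=
    ENNReal.rpow_le_one_of_one_le_of_neg le_add_self
      (div_neg_of_neg_of_pos (mul_neg_of_pos_of_neg (by linarith) (by linarith)) (by linarith))
  rw [ENNReal.ofReal_div_of_pos two_pos, ENNReal.ofReal_ofNat]
  calc _ ≤ u x / 2 + u x / 2 :=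
        add_le_add (ENNReal.mul_tsum_pow_half_mul_le hweight fun j => hiter (j + 1) x)
          (by simp only [div_eq_mul_inv]; rw [mul_right_comm]; exact mul_le_mul_left (hf x) _)
    _ = u x := ENNReal.add_halves _

/-- Lemma `lowbdsum`, case `2 < s < n`: if
`u ≥ C₀ 𝒩 u + C₀ |x-x₀|^{(αs-n)/(s-1)}` pointwise, then there is `C = C(n,α,s,C₀) > 0` such
that for every `q > 1` there is `C(q) > 0` with
`u ≥ C(q) Σ_{j=1}^∞ j^{q(2-s)/(s-1)} C^j 𝒩^j(f) + C |x-x₀|^{(αs-n)/(s-1)}`,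
where `f(y) = |y-x₀|^{(αs-n)/(s-1)}`. -/
theorem statement7 (n : ℕ) (hn : 2 ≤ n) (α s C₀ : ℝ) (hs : 2 < s) (hsn : s < n) (hα : 0 < α)
    (hαs : α * s < n) (hC₀ : 0 < C₀) :
    ∃ C : ℝ, 0 < C ∧
      ∀ q : ℝ, 1 < q →
        ∃ Cq : ℝ, 0 < Cq ∧
          ∀ σ : Measure (En n), IsLocallyFiniteMeasure σ →
            ∀ (x₀ : En n) (u : En n → ℝ≥0∞), Measurable u →
              (∀ x : En n,
                ENNReal.ofReal C₀ * Nop n α s σ u x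
                  + ENNReal.ofReal C₀ * (ENNReal.ofReal ‖x - x₀‖) ^ ((α*s-(n:ℝ))/(s-1))
                  ≤ u x) →
              ∀ x : En n,
                ENNReal.ofReal Cq *
                    (∑' j : ℕ, ((j:ℝ≥0∞) + 1) ^ (q*(2-s)/(s-1)) * ENNReal.ofReal C ^ (j+1)
                      * ((Nop n α s σ)^[j+1]
                          (fun y => (ENNReal.ofReal ‖y - x₀‖) ^ ((α*s-(n:ℝ))/(s-1))) x))
                  + ENNReal.ofReal C * (ENNReal.ofReal ‖x - x₀‖) ^ ((α*s-(n:ℝ))/(s-1))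
                  ≤ u x :=
  statement7_general n α s C₀ hs hC₀
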